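/- Let λ = (λ₁,…,λ_s) be a partition of n with s ≥ 2, and let 2 ≤ i ≤ s be such that either i = s or λ_i > λ_{i+1}. Let λ' be λ with its i-th part decreased by 1 (deleting it if it becomes 0). Then the eigenvalues η of the perfect matching derangement graph, defined by η_μ = (-1)^{|μ|-μ₁} f(μ), satisfy η_λ = −η_{λ'} + (-1)^{s+1}(2λ_i + s − i − 1) η_{λ − 1̂} + (-1)^{s+1}(2λ_i + s − i − 2) η_{λ' − 1̂}. -/

import Mathlib

/-- The odd double factorial `(2k-1)!! = 1 * 3 * ... * (2k-1)`, with `odf 0 = 1`. -/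
def odf (k : Nat) : Int := ∏ j ∈ Finset.Icc 1 k, (2 * (j : Int) - 1)

/-- Subtract `k` from every part, deleting parts that become zero. -/
def subHat (k : Nat) (l : List Nat) : List Nat :=
  (l.map (fun x => x - k)).filter (fun x => x ≠ 0)

/-- `l` is a partition: a non-increasing list of positive integers. -/
def IsPartition (l : List Nat) : Prop := l.Chain' (· ≥ ·) ∧ ∀ x ∈ l, 0 < x

/-- Increase the `i`-th part (1-based indexing). -/
def upAt (i : Nat) (l : List Nat) : List Nat := l.set (i - 1) (l.getD (i - 1) 0 + 1)

/-- Decrease the `j`-th part (1-based indexing), deleting it if it becomes zero. -/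
def downAt (j : Nat) (l : List Nat) : List Nat :=
  (l.set (j - 1) (l.getD (j - 1) 0 - 1)).filter (fun x => x ≠ 0)

/-!
Write `λ = μ ++ [t]`. The recursion expresses `f λ` as the binomial sum
`Σₖ C(t,k) (2k-1)!! f(μ - k̂)`, and `f λ'`, `f (λ - 1̂)`, `f (λ' - 1̂)` likewise. If `i` is the last
position, `λ' = μ ++ [t - 1]` and the identity reduces to Pascal's rule together with
`(2k+1) C(n,k) = (2n+1) C(n,k) - 2n C(n-1,k)`. Otherwise `λ' = μ' ++ [t]`, where `μ'` lowers the
`i`-th part of `μ`; the identity for the pair `(μ - k̂, μ' - k̂)`, which has fewer parts after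
position `i`, is a first-order recurrence in `k`, and summed against the weights `C(t,k) (2k-1)!!`
it telescopes into the identity for `λ`. For `η`, note that `|ν| - ν₁` drops by one when a part is
lowered and by the number of parts minus one under `- 1̂`.
-/

open Finset

@[simp] lemma odf_zero : odf 0 = 1 := rfl

lemma odf_succ (k : ℕ) : odf (k + 1) = odf k * (2 * k + 1) := by
  rw [odf, odf, prod_Icc_succ_top (by omega)]
  push_cast
  ring

lemma isPartition_iff {l : List ℕ} :
    IsPartition l ↔ l.Pairwise (· ≥ ·) ∧ ∀ x ∈ l, 0 < x := by
  rw [IsPartition, List.Chain', List.isChain_iff_pairwise]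

section subHat

variable {k x : ℕ} {l : List ℕ}

@[simp] lemma subHat_nil (k : ℕ) : subHat k [] = [] := rfl

lemma subHat_cons_of_le (h : x ≤ k) (l : List ℕ) : subHat k (x :: l) = subHat k l := by
  simp [subHat, Nat.sub_eq_zero_of_le h]

lemma subHat_cons_of_lt (h : k < x) (l : List ℕ) :
    subHat k (x :: l) = (x - k) :: subHat k l := by
  simp [subHat, Nat.sub_ne_zero_of_lt h]

lemma subHat_append (k : ℕ) (l₁ l₂ : List ℕ) :
    subHat k (l₁ ++ l₂) = subHat k l₁ ++ subHat k l₂ := by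
  simp [subHat, List.filter_append]

lemma subHat_append_cons_of_lt (h : k < x) (a b : List ℕ) :
    subHat k (a ++ x :: b) = subHat k a ++ (x - k) :: subHat k b := by
  rw [subHat_append, subHat_cons_of_lt h]

lemma subHat_eq_map (h : ∀ y ∈ l, k < y) : subHat k l = l.map (· - k) := by
  rw [subHat, List.filter_eq_self]
  simp only [List.mem_map, forall_exists_index, and_imp, forall_apply_eq_imp_iff₂]
  intro y hy
  simpa using Nat.sub_ne_zero_of_lt (h y hy)

lemma length_subHat (h : ∀ y ∈ l, k < y) : (subHat k l).length = l.length := by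
  rw [subHat_eq_map h, List.length_map]

lemma subHat_eq_nil (h : ∀ y ∈ l, y ≤ k) : subHat k l = [] := by
  simpa [subHat, List.filter_eq_nil_iff, Nat.sub_eq_zero_iff_le] using h

lemma subHat_zero (h : ∀ y ∈ l, 0 < y) : subHat 0 l = l := by
  simp [subHat_eq_map h]

lemma subHat_subHat (k k' : ℕ) (l : List ℕ) :
    subHat k' (subHat k l) = subHat (k + k') l := by
  induction l with
  | nil => rfl
  | cons x l ih =>
    rcases le_or_gt x k with h | h
    · rw [subHat_cons_of_le h, subHat_cons_of_le (by omega), ih]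
    · rcases le_or_gt x (k + k') with h' | h'
      · rw [subHat_cons_of_lt h, subHat_cons_of_le (by omega), subHat_cons_of_le h', ih]
      · rw [subHat_cons_of_lt h, subHat_cons_of_lt (by omega), subHat_cons_of_lt h', ih,
          Nat.sub_sub]

lemma sum_subHat_add_mul_length (h : ∀ y ∈ l, k ≤ y) :
    (subHat k l).sum + k * l.length = l.sum := by
  induction l with
  | nil => simp
  | cons x l ih =>
    have hx := h x List.mem_cons_self
    have := ih fun y hy => h y (List.mem_cons_of_mem x hy)
    rcases hx.eq_or_lt with rfl | hx
    · rw [subHat_cons_of_le le_rfl]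
      simp only [List.length_cons, List.sum_cons]
      lia
    · rw [subHat_cons_of_lt hx]
      simp only [List.length_cons, List.sum_cons]
      lia

lemma tail_subHat (h : l.Pairwise (· ≥ ·)) : (subHat k l).tail = subHat k l.tail := by
  rcases l with _ | ⟨x, l⟩
  · rfl
  rw [List.tail_cons]
  rcases le_or_gt x k with hx | hx
  · rw [subHat_cons_of_le hx, subHat_eq_nil fun y hy => (List.rel_of_pairwise_cons h hy).trans hx]
    rfl
  · rw [subHat_cons_of_lt hx, List.tail_cons]

lemma IsPartition.subHat (h : IsPartition l) (k : ℕ) : IsPartition (subHat k l) := by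
  rw [isPartition_iff] at h ⊢
  refine ⟨(List.pairwise_map.mpr (h.1.imp fun hab => Nat.sub_le_sub_right hab k)).sublist
    List.filter_sublist, fun y hy => ?_⟩
  simpa [Nat.pos_iff_ne_zero, _root_.subHat] using (List.mem_filter.mp hy).2

end subHat

lemma isPartition_append_singleton_iff {μ : List ℕ} {t : ℕ} :
    IsPartition (μ ++ [t]) ↔ IsPartition μ ∧ 0 < t ∧ ∀ y ∈ μ, t ≤ y := by
  simp only [isPartition_iff, List.pairwise_append, List.mem_append, List.mem_singleton,
    or_imp, forall_and, forall_eq, List.pairwise_singleton, true_and]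
  tauto

lemma IsPartition.le_of_mem_left {a b : List ℕ} {x y : ℕ} (h : IsPartition (a ++ x :: b))
    (hy : y ∈ a) : x ≤ y :=
  (List.pairwise_append.mp (isPartition_iff.mp h).1).2.2 y hy x List.mem_cons_self

lemma pairwise_append_cons_pred {a b : List ℕ} {x : ℕ} (h : (a ++ x :: b).Pairwise (· ≥ ·))
    (hb : ∀ y ∈ b, y < x) : (a ++ (x - 1) :: b).Pairwise (· ≥ ·) := by
  simp only [List.pairwise_append, List.pairwise_cons, List.mem_cons] at h ⊢
  obtain ⟨ha, ⟨-, hb'⟩, hab⟩ := h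
  refine ⟨ha, ⟨fun y hy => by have := hb y hy; omega, hb'⟩, fun y hy z hz => ?_⟩
  rcases hz with rfl | hz
  · have := hab y hy x (Or.inl rfl); omega
  · exact hab y hy z (Or.inr hz)

lemma IsPartition.append_cons_pred {a b : List ℕ} {x : ℕ} (h : IsPartition (a ++ x :: b))
    (hb : ∀ y ∈ b, y < x) (hx : 2 ≤ x) : IsPartition (a ++ (x - 1) :: b) := by
  rw [isPartition_iff] at h ⊢
  refine ⟨pairwise_append_cons_pred h.1 hb, fun y hy => ?_⟩
  simp only [List.mem_append, List.mem_cons] at hy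
  rcases hy with hy | rfl | hy
  · exact h.2 y (by simp [hy])
  · omega
  · exact h.2 y (by simp [hy])

lemma IsPartition.exists_append_cons {l : List ℕ} {i : ℕ} (hl : IsPartition l) (hi : 1 ≤ i)
    (hil : i ≤ l.length) (hcond : i = l.length ∨ l.getD i 0 < l.getD (i - 1) 0) :
    ∃ a x b, l = a ++ x :: b ∧ a.length + 1 = i ∧ ∀ y ∈ b, y < x := by
  obtain ⟨a, r, rfl, ha⟩ : ∃ a r, l = a ++ r ∧ a.length = i - 1 :=
    ⟨l.take (i - 1), l.drop (i - 1), (List.take_append_drop _ _).symm, by simp; omega⟩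
  rcases r with _ | ⟨x, b⟩
  · simp at hil; omega
  refine ⟨a, x, b, rfl, by omega, ?_⟩
  have hpw := (isPartition_iff.mp hl).1
  simp only [List.pairwise_append, List.pairwise_cons] at hpw
  rcases b with _ | ⟨z, b⟩
  · simp
  · have hz : z < x := by
      simpa [← ha, show i = a.length + 1 by omega, List.getD_eq_getElem?_getD,
        List.getElem?_append_right] using hcond
    intro y hy
    rcases List.mem_cons.mp hy with rfl | hy
    · exact hz
    · exact (List.rel_of_pairwise_cons hpw.2.1.2 hy).trans_lt hz

lemma downAt_append_cons (a b : List ℕ) (x : ℕ) :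
    downAt (a.length + 1) (a ++ x :: b) = subHat 0 (a ++ (x - 1) :: b) := by
  simp [downAt, subHat, List.getD_eq_getElem?_getD]

lemma sum_sub_headD_eq_sum_tail (l : List ℕ) : l.sum - l.headD 0 = l.tail.sum := by
  cases l <;> simp

def odfBinomSum (p : ℕ → ℤ) (n : ℕ) : ℤ :=
  ∑ k ∈ range (n + 1), (n.choose k : ℤ) * odf k * p k

@[simp] lemma odfBinomSum_zero (p : ℕ → ℤ) : odfBinomSum p 0 = p 0 := by
  simp [odfBinomSum]

lemma add_sum_Icc_eq_odfBinomSum (p : ℕ → ℤ) (n : ℕ) :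
    p 0 + ∑ k ∈ Icc 1 n, (n.choose k : ℤ) * odf k * p k = odfBinomSum p n := by
  rw [odfBinomSum, range_eq_Ico, sum_eq_sum_Ico_succ_bot (by omega), Ico_add_one_right_eq_Icc]
  simp

lemma odfBinomSum_succ (p : ℕ → ℤ) (n : ℕ) :
    odfBinomSum p (n + 1) = odfBinomSum p n
      + ∑ k ∈ range (n + 1), (n.choose k : ℤ) * odf (k + 1) * p (k + 1) := by
  have hshift : odfBinomSum p n
      = ∑ k ∈ range (n + 1), (n.choose (k + 1) : ℤ) * odf (k + 1) * p (k + 1) + p 0 := by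
    rw [odfBinomSum, sum_range_succ', sum_range_succ _ n, Nat.choose_succ_self]
    simp
  rw [hshift, odfBinomSum, sum_range_succ']
  simp only [Nat.choose_succ_succ', Nat.cast_add, add_mul, sum_add_distrib, odf_zero,
    Nat.choose_zero_right, Nat.cast_one, mul_one]
  ring

lemma sum_choose_mul_odf_succ (r : ℕ → ℤ) (n : ℕ) :
    ∑ k ∈ range (n + 1), (n.choose k : ℤ) * odf (k + 1) * r k
      = (2 * n + 1) * odfBinomSum r n - 2 * n * odfBinomSum r (n - 1) := by
  rcases n with _ | m
  · simp [odf_succ]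
  have hext : odfBinomSum r m
      = ∑ k ∈ range (m + 1 + 1), (m.choose k : ℤ) * odf k * r k := by
    rw [odfBinomSum, sum_range_succ _ (m + 1), Nat.choose_succ_self]
    simp
  rw [Nat.add_sub_cancel, hext, odfBinomSum, mul_sum, mul_sum, ← sum_sub_distrib]
  refine sum_congr rfl fun k hk => ?_
  have hkm : k ≤ m + 1 := Nat.lt_succ_iff.mp (mem_range.mp hk)
  have hchoose := congrArg (Nat.cast : ℕ → ℤ) (Nat.choose_mul_succ_eq m k)
  push_cast [Nat.cast_sub hkm] at hchoose
  rw [odf_succ]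
  push_cast
  linear_combination 2 * odf k * r k * hchoose

lemma odfBinomSum_succ_expand (p : ℕ → ℤ) (n : ℕ) :
    odfBinomSum p (n + 1) = odfBinomSum p n + (2 * n + 1) * odfBinomSum (fun j => p (j + 1)) n
      - 2 * n * odfBinomSum (fun j => p (j + 1)) (n - 1) := by
  rw [odfBinomSum_succ, sum_choose_mul_odf_succ (fun j => p (j + 1))]
  ring

lemma odfBinomSum_succ_of_step (p q : ℕ → ℤ) (A : ℤ) (n : ℕ)
    (h : ∀ k ≤ n, p k = q k + (A - 2 * k - 1) * p (k + 1) - (A - 2 * k - 2) * q (k + 1)) :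
    odfBinomSum p (n + 1) = odfBinomSum q (n + 1) + A * odfBinomSum (fun j => p (j + 1)) n
      - (A - 1) * odfBinomSum (fun j => q (j + 1)) n := by
  rw [odfBinomSum_succ, odfBinomSum_succ]
  simp only [odfBinomSum, mul_sum, ← sum_add_distrib, ← sum_sub_distrib]
  refine sum_congr rfl fun k hk => ?_
  rw [odf_succ, h k (Nat.lt_succ_iff.mp (mem_range.mp hk))]
  ring

def PartitionRecursion (f : List ℕ → ℤ) : Prop :=
  ∀ l : List ℕ, IsPartition l → 2 ≤ l.length →
    f l = f l.dropLast + ∑ k ∈ Icc 1 (l.getLastD 0),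
      ((l.getLastD 0).choose k : ℤ) * odf k * f (subHat k l.dropLast)

namespace PartitionRecursion

variable {f : List ℕ → ℤ}

lemma apply_subHat_append_singleton (hf : PartitionRecursion f) {μ : List ℕ} {t : ℕ}
    (hμ : IsPartition μ) (hne : μ ≠ []) (hμt : ∀ y ∈ μ, t ≤ y) (k : ℕ) :
    f (subHat k (μ ++ [t])) = odfBinomSum (fun j => f (subHat (j + k) μ)) (t - k) := by
  rcases le_or_gt t k with htk | htk
  · rw [subHat_append, subHat_cons_of_le htk, subHat_nil, List.append_nil,
      Nat.sub_eq_zero_of_le htk, odfBinomSum_zero, zero_add]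
  have hpart := (isPartition_append_singleton_iff.mpr ⟨hμ, by omega, hμt⟩).subHat k
  rw [subHat_append, subHat_cons_of_lt htk, subHat_nil] at hpart ⊢
  have hlen : (subHat k μ).length = μ.length := length_subHat fun y hy => by
    have := hμt y hy; omega
  rw [hf _ hpart (by simpa [hlen, Nat.one_le_iff_ne_zero] using hne), List.dropLast_concat,
    List.getLastD_concat, ← add_sum_Icc_eq_odfBinomSum]
  simp only [subHat_subHat, zero_add, add_comm k]

lemma apply_append_singleton (hf : PartitionRecursion f) {a : List ℕ} {x : ℕ}
    (hl : IsPartition (a ++ [x])) (ha : a ≠ []) :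
    f (a ++ [x]) = f (subHat 0 (a ++ [x - 1])) + (2 * x - 1) * f (subHat 1 (a ++ [x]))
      - (2 * x - 2) * f (subHat 1 (a ++ [x - 1])) := by
  obtain ⟨hμ, hx, hax⟩ := isPartition_append_singleton_iff.mp hl
  obtain ⟨n, rfl⟩ : ∃ n, x = n + 1 := ⟨x - 1, by omega⟩
  have hax' : ∀ y ∈ a, n ≤ y := fun y hy => by have := hax y hy; omega
  have hf0 : f (a ++ [n + 1]) = f (subHat 0 (a ++ [n + 1])) := by
    rw [subHat_zero (isPartition_iff.mp hl).2]
  rw [hf0, Nat.add_sub_cancel, hf.apply_subHat_append_singleton hμ ha hax,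
    hf.apply_subHat_append_singleton hμ ha hax, hf.apply_subHat_append_singleton hμ ha hax',
    hf.apply_subHat_append_singleton hμ ha hax', Nat.sub_zero, Nat.sub_zero, Nat.add_sub_cancel,
    odfBinomSum_succ_expand]
  push_cast
  ring

lemma apply_append_singleton_of_step (hf : PartitionRecursion f) {μ μ' : List ℕ} {m : ℕ}
    (hμ : IsPartition μ) (hμ' : IsPartition μ') (hne : μ ≠ []) (hne' : μ' ≠ [])
    (hμt : ∀ y ∈ μ, m + 1 ≤ y) (hμ't : ∀ y ∈ μ', m + 1 ≤ y) (A : ℤ)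
    (hstep : ∀ k ≤ m, f (subHat k μ) = f (subHat k μ')
      + (A - 2 * k - 1) * f (subHat (k + 1) μ) - (A - 2 * k - 2) * f (subHat (k + 1) μ')) :
    f (subHat 0 (μ ++ [m + 1])) = f (subHat 0 (μ' ++ [m + 1])) + A * f (subHat 1 (μ ++ [m + 1]))
      - (A - 1) * f (subHat 1 (μ' ++ [m + 1])) := by
  rw [hf.apply_subHat_append_singleton hμ hne hμt,
    hf.apply_subHat_append_singleton hμ hne hμt, hf.apply_subHat_append_singleton hμ' hne' hμ't,
    hf.apply_subHat_append_singleton hμ' hne' hμ't, Nat.sub_zero, Nat.add_sub_cancel]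
  exact odfBinomSum_succ_of_step _ _ A m hstep

lemma apply_append_cons_append_singleton (hf : PartitionRecursion f) {a b : List ℕ} {x t : ℕ}
    (ih : ∀ (a' b' : List ℕ) (x' : ℕ), b'.length = b.length → IsPartition (a' ++ x' :: b') →
      a' ≠ [] → (∀ y ∈ b', y < x') → f (a' ++ x' :: b') = f (subHat 0 (a' ++ (x' - 1) :: b'))
        + (2 * x' + b'.length - 1) * f (subHat 1 (a' ++ x' :: b'))
        - (2 * x' + b'.length - 2) * f (subHat 1 (a' ++ (x' - 1) :: b')))
    (hl : IsPartition (a ++ x :: b ++ [t])) (ha : a ≠ []) (hb : ∀ y ∈ b ++ [t], y < x) :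
    f (a ++ x :: b ++ [t]) = f (subHat 0 (a ++ (x - 1) :: b ++ [t]))
      + (2 * x + b.length) * f (subHat 1 (a ++ x :: b ++ [t]))
      - (2 * x + b.length - 1) * f (subHat 1 (a ++ (x - 1) :: b ++ [t])) := by
  obtain ⟨hμ, ht, hμt⟩ := isPartition_append_singleton_iff.mp hl
  have hbx : ∀ y ∈ b, y < x := fun y hy => hb y (List.mem_append_left _ hy)
  have htx : t < x := hb t (by simp)
  have hax : ∀ y ∈ a, x ≤ y := fun y hy => hμ.le_of_mem_left hy
  have hbt : ∀ y ∈ b, t ≤ y := fun y hy => hμt y (by simp [hy])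
  have hμ't : ∀ y ∈ a ++ (x - 1) :: b, t ≤ y := by
    simp only [List.mem_append, List.mem_cons]
    rintro y (hy | rfl | hy)
    exacts [by have := hax y hy; omega, by omega, hbt y hy]
  obtain ⟨m, rfl⟩ : ∃ m, t = m + 1 := ⟨t - 1, by omega⟩
  have hstep : ∀ k ≤ m, f (subHat k (a ++ x :: b)) = f (subHat k (a ++ (x - 1) :: b))
      + (2 * x + b.length - 2 * k - 1) * f (subHat (k + 1) (a ++ x :: b))
      - (2 * x + b.length - 2 * k - 2) * f (subHat (k + 1) (a ++ (x - 1) :: b)) := by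
    intro k hk
    have hka : ∀ y ∈ a, k < y := fun y hy => by have := hax y hy; omega
    have hkb : ∀ y ∈ b, k < y := fun y hy => by have := hbt y hy; omega
    have hlen : (subHat k b).length = b.length := length_subHat hkb
    have IH := ih (subHat k a) (subHat k b) (x - k) hlen
      (by rw [← subHat_append_cons_of_lt (by omega)]; exact hμ.subHat k)
      (by simpa [← List.length_pos_iff, length_subHat hka] using ha)
      (by simpa [subHat_eq_map hkb] using fun z hz => Nat.sub_lt_sub_right (hkb z hz).le (hbx z hz))
    rw [← subHat_append_cons_of_lt (by omega), Nat.sub_right_comm,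
      ← subHat_append_cons_of_lt (by omega), subHat_subHat, subHat_subHat, subHat_subHat, hlen,
      add_zero] at IH
    rw [IH]
    push_cast [show k ≤ x by omega]
    ring
  conv_lhs => rw [← subHat_zero (isPartition_iff.mp hl).2]
  simpa using hf.apply_append_singleton_of_step hμ (hμ.append_cons_pred hbx (by omega))
    (by simp) (by simp) hμt hμ't _ hstep

theorem apply_append_cons (hf : PartitionRecursion f) (a b : List ℕ) (x : ℕ)
    (hl : IsPartition (a ++ x :: b)) (ha : a ≠ []) (hb : ∀ y ∈ b, y < x) :
    f (a ++ x :: b) = f (subHat 0 (a ++ (x - 1) :: b))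
      + (2 * x + b.length - 1) * f (subHat 1 (a ++ x :: b))
      - (2 * x + b.length - 2) * f (subHat 1 (a ++ (x - 1) :: b)) := by
  induction hn : b.length generalizing a x b with
  | zero =>
    obtain rfl := List.eq_nil_of_length_eq_zero hn
    simpa using hf.apply_append_singleton hl ha
  | succ n ih =>
    rcases List.eq_nil_or_concat' b with rfl | ⟨b, t, rfl⟩
    · simp at hn
    rw [List.length_append, List.length_singleton, Nat.add_right_cancel_iff] at hn
    subst hn
    have hsplit : ∀ c, a ++ c :: (b ++ [t]) = a ++ c :: b ++ [t] := by simp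
    simp only [hsplit, Nat.cast_add, Nat.cast_one] at hl ⊢
    have key := hf.apply_append_cons_append_singleton
      (fun a' b' x' h hl' ha' hb' => by rw [h]; exact ih a' b' x' hl' ha' hb' h) hl ha hb
    linear_combination key

theorem eta_append_cons (hf : PartitionRecursion f) {η : List ℕ → ℤ}
    (hη : ∀ l, η l = (-1) ^ (l.sum - l.headD 0) * f l) (a b : List ℕ) (x : ℕ)
    (hl : IsPartition (a ++ x :: b)) (ha : a ≠ []) (hb : ∀ y ∈ b, y < x) :
    η (a ++ x :: b) = -η (subHat 0 (a ++ (x - 1) :: b))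
      + (-1) ^ ((a ++ x :: b).length + 1) * (2 * x + b.length - 1) * η (subHat 1 (a ++ x :: b))
      + (-1) ^ ((a ++ x :: b).length + 1) * (2 * x + b.length - 2)
        * η (subHat 1 (a ++ (x - 1) :: b)) := by
  have hrec := hf.apply_append_cons a b x hl ha hb
  obtain ⟨hpw, hpos⟩ := isPartition_iff.mp hl
  have hpw' := pairwise_append_cons_pred hpw hb
  have hx : 0 < x := hpos x (by simp)
  simp only [hη, sum_sub_headD_eq_sum_tail, tail_subHat hpw, tail_subHat hpw']
  obtain ⟨c, a, rfl⟩ := List.exists_cons_of_ne_nil ha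
  simp only [List.cons_append, List.tail_cons, List.length_cons] at hrec ⊢
  set r := a ++ x :: b
  set r' := a ++ (x - 1) :: b
  have hr : r'.sum + 1 = r.sum := by simp [r, r']; omega
  have hrpos : ∀ y ∈ r, 1 ≤ y := fun y hy => hpos y (List.mem_cons_of_mem c hy)
  have hsum0 := sum_subHat_add_mul_length (k := 0) (l := r') (fun y _ => Nat.zero_le y)
  have hsum1 := sum_subHat_add_mul_length hrpos
  have hσ' : (-1 : ℤ) ^ (subHat 0 r').sum = -(-1) ^ r.sum := by
    rw [← hr, ← hsum0, pow_succ]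
    ring
  have hσ₁ : (-1 : ℤ) ^ (r.length + 1 + 1) * (-1) ^ (subHat 1 r).sum = (-1) ^ r.sum := by
    rw [← hsum1, ← pow_add, show r.length + 1 + 1 + (subHat 1 r).sum
      = (subHat 1 r).sum + 1 * r.length + 2 by ring, pow_add]
    norm_num
  have hσ₂ : (2 * x + b.length - 2 : ℤ) * ((-1) ^ (r.length + 1 + 1) * (-1) ^ (subHat 1 r').sum)
      = -(2 * x + b.length - 2) * (-1) ^ r.sum := by
    rcases Nat.lt_or_ge x 2 with hx1 | hx2
    · obtain rfl : b = [] := List.eq_nil_iff_forall_not_mem.mpr fun y hy => by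
        have := hb y hy; have := hpos y (by simp [hy]); omega
      obtain rfl : x = 1 := by omega
      simp
    · have hr'pos : ∀ y ∈ r', 1 ≤ y := by
        simp only [r', List.mem_append, List.mem_cons]
        rintro y (hy | rfl | hy)
        exacts [hrpos y (by simp [r, hy]), by omega, hrpos y (by simp [r, hy])]
      have hsum1' := sum_subHat_add_mul_length hr'pos
      have hlen : r'.length = r.length := by simp [r, r']
      rw [← hr, ← hsum1', hlen, ← pow_add, show r.length + 1 + 1 + (subHat 1 r').sum
        = (subHat 1 r').sum + 1 * r.length + 1 + 1 by ring, pow_add, pow_succ]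
      ring
  linear_combination (-1 : ℤ) ^ r.sum * hrec + f (subHat 0 (c :: r')) * hσ'
    - (2 * x + b.length - 1 : ℤ) * f (subHat 1 (c :: r)) * hσ₁ - f (subHat 1 (c :: r')) * hσ₂

end PartitionRecursion

theorem stmt6_general
    (f : List Nat → Int)
    (hfr : ∀ l : List Nat, IsPartition l → 2 ≤ l.length →
      f l = f l.dropLast + ∑ k ∈ Finset.Icc 1 (l.getLastD 0),
        ((l.getLastD 0).choose k : Int) * odf k * f (subHat k l.dropLast))
    (η : List Nat → Int) (hη : ∀ l : List Nat, η l = (-1 : Int) ^ (l.sum - l.headD 0) * f l)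
    (lam : List Nat) (hlam : IsPartition lam)
    (i : Nat) (hi2 : 2 ≤ i) (his : i ≤ lam.length)
    (hcond : i = lam.length ∨ lam.getD i 0 < lam.getD (i - 1) 0) :
    η lam = -η (downAt i lam)
        + (-1 : Int) ^ (lam.length + 1)
          * (2 * (lam.getD (i - 1) 0 : Int) + (lam.length : Int) - (i : Int) - 1)
          * η (subHat 1 lam)
        + (-1 : Int) ^ (lam.length + 1)
          * (2 * (lam.getD (i - 1) 0 : Int) + (lam.length : Int) - (i : Int) - 2)
          * η (subHat 1 (downAt i lam)) := by
  obtain ⟨a, x, b, rfl, rfl, hb⟩ := hlam.exists_append_cons (by omega) his hcond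
  have ha : a ≠ [] := by rintro rfl; simp at hi2
  have hA : ∀ c : ℤ, 2 * ((a ++ x :: b).getD (a.length + 1 - 1) 0 : ℤ)
      + (a ++ x :: b).length - (a.length + 1 : ℕ) - c = 2 * x + b.length - c := by
    intro c
    rw [Nat.add_sub_cancel, List.getD_append_right _ _ _ _ le_rfl, Nat.sub_self,
      List.getD_cons_zero, List.length_append, List.length_cons]
    push_cast
    ring
  rw [downAt_append_cons, subHat_subHat, zero_add, hA 1, hA 2]
  exact PartitionRecursion.eta_append_cons hfr hη a b x hlam ha hb

theorem stmt6
    (d : Nat → Int) (hd0 : d 0 = 1) (hd1 : d 1 = 0)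
    (hd : ∀ n : Nat, 2 ≤ n → d n = 2 * ((n : Int) - 1) * (d (n - 1) + d (n - 2)))
    (f : List Nat → Int) (hf0 : f [] = 1) (hf1 : ∀ m : Nat, f [m] = d m)
    (hfr : ∀ l : List Nat, IsPartition l → 2 ≤ l.length →
      f l = f l.dropLast + ∑ k ∈ Finset.Icc 1 (l.getLastD 0),
        ((l.getLastD 0).choose k : Int) * odf k * f (subHat k l.dropLast))
    (η : List Nat → Int) (hη : ∀ l : List Nat, η l = (-1 : Int) ^ (l.sum - l.headD 0) * f l)
    (lam : List Nat) (hlam : IsPartition lam) (hs : 2 ≤ lam.length)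
    (i : Nat) (hi2 : 2 ≤ i) (his : i ≤ lam.length)
    (hcond : i = lam.length ∨ lam.getD i 0 < lam.getD (i - 1) 0) :
    η lam = -η (downAt i lam)
        + (-1 : Int) ^ (lam.length + 1)
          * (2 * (lam.getD (i - 1) 0 : Int) + (lam.length : Int) - (i : Int) - 1)
          * η (subHat 1 lam)
        + (-1 : Int) ^ (lam.length + 1)
          * (2 * (lam.getD (i - 1) 0 : Int) + (lam.length : Int) - (i : Int) - 2)
          * η (subHat 1 (downAt i lam)) :=
  stmt6_general f hfr η hη lam hlam i hi2 his hcond
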